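/- arXiv:1208.6059 — 4 statements merged into one kernel-verified Lean document; each statement's English description precedes it below -/
import Mathlib

section
/- Let T be a measure-preserving transformation of a probability space (Ω, μ) and B a measurable set with μ(B) > 0. Define F_B(t) = μ({x : τ_B(x) > t/μ(B)}). Then for all t, s > 0, |F_B(t) − F_B(s)| ≤ |t − s| + μ(B). -/
open MeasureTheory Set Function ENNReal

/-- First entry time to `B` under `T` (`⊤` if the orbit never enters `B`). -/
noncomputable def tauE {Ω : Type*} (T : Ω → Ω) (B : Set Ω) (x : Ω) : ℕ∞ :=
  sInf ((fun j : ℕ => (j : ℕ∞)) '' {j : ℕ | 0 < j ∧ T^[j] x ∈ B})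

/-- The induced (first return) map on `U`. -/
noncomputable def indMap {Ω : Type*} (T : Ω → Ω) (U : Set Ω) (x : Ω) : Ω :=
  T^[(tauE T U x).toNat] x

/-
The event {τ_B > r/μ(B)} is the event that no iterate T^j, 1 ≤ j ≤ r/μ(B), lands in B. Raising
the threshold from s/μ(B) to t/μ(B) only adds the constraints with ⌊s/μ(B)⌋ < j ≤ ⌊t/μ(B)⌋, so the
two events differ by at most that many preimages T^{-j}B, each of measure at most μ(B) by
invariance. There are at most (t - s)/μ(B) + 1 of them.
-/

/-- The event `{τ_B > r}`. -/
def noEntryUpTo {Ω : Type*} (T : Ω → Ω) (B : Set Ω) (r : ℝ) : Set Ω :=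
  {x | ∀ j : ℕ, 1 ≤ j → (j : ℝ) ≤ r → T^[j] x ∉ B}

section NoEntry

variable {Ω : Type*} (T : Ω → Ω) (B : Set Ω)

theorem noEntryUpTo_antitone : Antitone (noEntryUpTo T B) :=
  fun _ _ huv _ hx j hj hjv => hx j hj (hjv.trans huv)

theorem noEntryUpTo_diff_subset (u v : ℝ) :
    noEntryUpTo T B u \ noEntryUpTo T B v ⊆ ⋃ j ∈ Finset.Ioc ⌊u⌋₊ ⌊v⌋₊, T^[j] ⁻¹' B := by
  rintro x ⟨hxu, hxv⟩
  simp only [noEntryUpTo, mem_ofPred_eq, not_forall, not_not] at hxv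
  obtain ⟨j, hj, hjv, hjB⟩ := hxv
  have hj0 : j ≠ 0 := by omega
  refine mem_iUnion₂.mpr ⟨j, Finset.mem_Ioc.mpr ⟨?_, (Nat.le_floor_iff' hj0).mpr hjv⟩, hjB⟩
  by_contra! hju
  exact hxu j hj ((Nat.le_floor_iff' hj0).mp hju) hjB

end NoEntry

theorem card_Ioc_floor_le {u v : ℝ} (huv : u ≤ v) :
    ((Finset.Ioc ⌊u⌋₊ ⌊v⌋₊).card : ℝ) ≤ v - u + 1 := by
  rw [Nat.card_Ioc]
  rcases lt_or_ge v 0 with hv | hv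
  · rw [Nat.floor_of_nonpos hv.le]
    simp only [Nat.zero_sub, Nat.cast_zero]
    linarith
  · rw [Nat.cast_sub (Nat.floor_mono huv)]
    linarith [Nat.floor_le hv, Nat.sub_one_lt_floor u]

theorem abs_div_sub_div_mul_le (x y : ℝ) {a : ℝ} (ha : 0 ≤ a) :
    |x / a - y / a| * a ≤ |x - y| := by
  rcases ha.eq_or_lt with rfl | ha
  · simp
  · rw [← sub_div, abs_div, abs_of_pos ha, div_mul_cancel₀ _ ha.ne']

section MeasurePreserving

variable {Ω : Type*} [MeasurableSpace Ω] {μ : Measure Ω} [IsFiniteMeasure μ] {T : Ω → Ω}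

theorem measureReal_noEntryUpTo_sub_le (hT : MeasurePreserving T μ μ) (B : Set Ω) {u v : ℝ}
    (huv : u ≤ v) :
    μ.real (noEntryUpTo T B u) - μ.real (noEntryUpTo T B v) ≤ (v - u + 1) * μ.real B := by
  set J := Finset.Ioc ⌊u⌋₊ ⌊v⌋₊
  have hsplit : μ.real (noEntryUpTo T B u) ≤
      μ.real (noEntryUpTo T B u \ noEntryUpTo T B v) + μ.real (noEntryUpTo T B v) :=
    (measureReal_mono (subset_sdiff_union _ _)).trans (measureReal_union_le _ _)
  have hdiff : μ.real (noEntryUpTo T B u \ noEntryUpTo T B v) ≤ J.card * μ.real B :=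
    calc μ.real (noEntryUpTo T B u \ noEntryUpTo T B v)
        ≤ μ.real (⋃ j ∈ J, T^[j] ⁻¹' B) :=
          measureReal_mono (noEntryUpTo_diff_subset T B u v) (measure_ne_top _ _)
      _ ≤ ∑ j ∈ J, μ.real (T^[j] ⁻¹' B) := measureReal_biUnion_finset_le _ _
      _ ≤ ∑ _j ∈ J, μ.real B :=
          Finset.sum_le_sum fun j _ => toReal_mono (measure_ne_top μ B)
            ((hT.iterate j).measure_preimage_le B)
      _ = J.card * μ.real B := by rw [Finset.sum_const, nsmul_eq_mul]
  have hcard : (J.card : ℝ) * μ.real B ≤ (v - u + 1) * μ.real B :=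
    mul_le_mul_of_nonneg_right (card_Ioc_floor_le huv) measureReal_nonneg
  linarith

theorem abs_measureReal_noEntryUpTo_sub_le (hT : MeasurePreserving T μ μ) (B : Set Ω)
    (u v : ℝ) :
    |μ.real (noEntryUpTo T B u) - μ.real (noEntryUpTo T B v)| ≤ (|v - u| + 1) * μ.real B := by
  wlog huv : u ≤ v generalizing u v with H
  · rw [abs_sub_comm, abs_sub_comm v]
    exact H v u (le_of_not_ge huv)
  have hanti := measureReal_mono (μ := μ) (noEntryUpTo_antitone T B huv)
  rw [abs_of_nonneg (sub_nonneg.mpr hanti), abs_of_nonneg (sub_nonneg.mpr huv)]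
  exact measureReal_noEntryUpTo_sub_le hT B huv

end MeasurePreserving

theorem stmt2_general {Ω : Type*} [MeasurableSpace Ω] (μ : Measure Ω) [IsProbabilityMeasure μ]
    (T : Ω → Ω) (hT : MeasurePreserving T μ μ) (B : Set Ω)
    (F : ℝ → ℝ)
    (hF : ∀ t : ℝ, F t =
      (μ {x | ∀ j : ℕ, 1 ≤ j → (j : ℝ) ≤ t / (μ B).toReal → T^[j] x ∉ B}).toReal)
    (t s : ℝ) :
    |F t - F s| ≤ |t - s| + (μ B).toReal := by
  change ∀ r, F r = μ.real (noEntryUpTo T B (r / μ.real B)) at hF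
  change _ ≤ _ + μ.real B
  calc |F t - F s| ≤ (|t / μ.real B - s / μ.real B| + 1) * μ.real B := by
        rw [hF, hF, abs_sub_comm (t / _)]; exact abs_measureReal_noEntryUpTo_sub_le hT B _ _
    _ ≤ |t - s| + μ.real B := by
        linarith [abs_div_sub_div_mul_le t s (measureReal_nonneg (μ := μ) (s := B))]

theorem stmt2 {Ω : Type*} [MeasurableSpace Ω] (μ : Measure Ω) [IsProbabilityMeasure μ]
    (T : Ω → Ω) (hT : MeasurePreserving T μ μ) (B : Set Ω) (hB : MeasurableSet B)
    (hBpos : 0 < μ B)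
    (F : ℝ → ℝ)
    (hF : ∀ t : ℝ, F t =
      (μ {x | ∀ j : ℕ, 1 ≤ j → (j : ℝ) ≤ t / (μ B).toReal → T^[j] x ∉ B}).toReal)
    (t s : ℝ) (ht : 0 < t) (hs : 0 < s) :
    |F t - F s| ≤ |t - s| + (μ B).toReal :=
  stmt2_general μ T hT B F hF t s
end

section
/- Let T be a measure-preserving map of a probability space (Ω, μ), U ⊆ Ω with μ(U) > 0, B ⊆ U, and s ≥ 1 an integer. For k ≥ 1 let U_k = {x ∈ U : τ_U(x) = k} and B_{k,j} = U_k ∩ T^{−j}{τ_B = s} for 0 ≤ j ≤ k−1. Then the sets B_{k,j}, over all k ≥ 1 and 0 ≤ j < k, are pairwise disjoint, and Σ_{k,j} μ(B_{k,j}) ≤ μ(B). -/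
/-!
Distinct return times `k` separate the sets `B_{k,j}` through `τ_U`. For a fixed `k` and
`j < j' < k`, a point of `B_{k,j}` has `T^j x` entering `B ⊆ U` at time `s`, so `k ≤ j + s`; then
`T^j' x` lies before that entry and enters `B` after only `s - (j' - j) < s` steps.

For the measure bound, `B_{k,j} ⊆ W_j := U ∩ {j < τ_U} ∩ T^{-j}{τ_B = s}` for every `k > j`.
Instead of the images `T^j W_j`, which need not be measurable, use the preimages
`T^{-(n-j)} W_j` for `j < n`: they are pairwise disjoint (a point of `U` cannot be reached
`j' - j` steps after a point with `j' < τ_U`) and all lie in `T^{-n}{τ_B = s}`. Since `T`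
preserves `μ`, `∑ μ(W_j) ≤ μ{τ_B = s} ≤ μ(T^{-s} B) = μ B`.
-/

open MeasureTheory Set Function ENNReal

section FirstEntry

variable {Ω : Type*} {T : Ω → Ω} {C : Set Ω} {x : Ω} {n : ℕ}

lemma tauE_le_of_iterate_mem {i : ℕ} (hi : 0 < i) (h : T^[i] x ∈ C) : tauE T C x ≤ i :=
  sInf_le ⟨i, ⟨hi, h⟩, rfl⟩

lemma exists_tauE_eq (h : tauE T C x ≠ ⊤) : ∃ i, 0 < i ∧ T^[i] x ∈ C ∧ tauE T C x = i := by
  have hne : ((fun j : ℕ => (j : ℕ∞)) '' {j : ℕ | 0 < j ∧ T^[j] x ∈ C}).Nonempty := by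
    by_contra hemp
    exact h (by rw [tauE, not_nonempty_iff_eq_empty.mp hemp, sInf_empty])
  obtain ⟨i, ⟨hi, hmem⟩, heq⟩ := csInf_mem hne
  exact ⟨i, hi, hmem, heq.symm⟩

lemma iterate_mem_of_tauE_eq (h : tauE T C x = n) : 0 < n ∧ T^[n] x ∈ C := by
  obtain ⟨i, hi, hmem, heq⟩ := exists_tauE_eq (h ▸ ENat.natCast_ne_top n)
  obtain rfl : i = n := by exact_mod_cast heq.symm.trans h
  exact ⟨hi, hmem⟩

lemma tauE_le_coe_iff : tauE T C x ≤ n ↔ ∃ i, 0 < i ∧ i ≤ n ∧ T^[i] x ∈ C := by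
  constructor
  · intro h
    obtain ⟨i, hi, hmem, heq⟩ := exists_tauE_eq (ne_top_of_le_ne_top (ENat.natCast_ne_top n) h)
    exact ⟨i, hi, by exact_mod_cast heq ▸ h, hmem⟩
  · rintro ⟨i, hi, hin, hmem⟩
    exact (tauE_le_of_iterate_mem hi hmem).trans (by exact_mod_cast hin)

lemma tauE_iterate_of_lt {m : ℕ} (h : tauE T C x = n) (hmn : m < n) :
    tauE T C (T^[m] x) = (n - m : ℕ) := by
  refine le_antisymm (tauE_le_of_iterate_mem (by omega) ?_) (le_sInf ?_)
  · rw [← iterate_add_apply, Nat.sub_add_cancel hmn.le]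
    exact (iterate_mem_of_tauE_eq h).2
  · rintro _ ⟨i, ⟨hi, hmem⟩, rfl⟩
    rw [← iterate_add_apply] at hmem
    have : n ≤ i + m := by exact_mod_cast h ▸ tauE_le_of_iterate_mem (by omega) hmem
    show ((n - m : ℕ) : ℕ∞) ≤ i
    exact_mod_cast (by omega : n - m ≤ i)

lemma disjoint_preimage_iterate_sub {j j' : ℕ} (hjj' : j < j') (hj'n : j' ≤ n) :
    Disjoint (T^[n - j] ⁻¹' C) (T^[n - j'] ⁻¹' {x | (j' : ℕ∞) < tauE T C x}) := by
  refine disjoint_left.mpr fun x hx hx' => ?_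
  have hsplit : T^[n - j] x = T^[j' - j] (T^[n - j'] x) := by
    rw [← iterate_add_apply]
    congr 1
    omega
  rw [mem_preimage, hsplit] at hx
  exact (tauE_le_of_iterate_mem (by omega) hx).trans (by exact_mod_cast (by omega : j' - j ≤ j'))
    |>.not_gt hx'

variable [MeasurableSpace Ω]

lemma measurableSet_tauE_le (hT : Measurable T) (hC : MeasurableSet C) (n : ℕ) :
    MeasurableSet {x | tauE T C x ≤ n} := by
  simp only [tauE_le_coe_iff, ofPred_exists, ofPred_and]
  exact .iUnion fun i =>
    (MeasurableSet.const _).inter ((MeasurableSet.const _).inter (hT.iterate i hC))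

lemma measurable_tauE (hT : Measurable T) (hC : MeasurableSet C) : Measurable (tauE T C) := by
  refine measurable_to_countable' fun y => ?_
  have hfiber : tauE T C ⁻¹' {y} = ⋂ n : ℕ, {x | tauE T C x ≤ n ↔ y ≤ n} := by
    ext x
    simp only [mem_preimage, mem_singleton_iff, mem_iInter, mem_ofPred_eq]
    exact ⟨fun h _ => h ▸ Iff.rfl, WithTop.eq_of_forall_le_coe_iff⟩
  rw [hfiber]
  refine .iInter fun n => ?_
  by_cases hy : y ≤ n
  · simpa only [hy, iff_true] using measurableSet_tauE_le hT hC n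
  · simp only [hy, iff_false]
    exact (measurableSet_tauE_le hT hC n).compl

end FirstEntry

section MeasurePreserving

variable {Ω : Type*} [MeasurableSpace Ω] {μ : Measure Ω} {T : Ω → Ω} {U A : Set Ω}

theorem tsum_measure_lt_tauE_inter_preimage_le (hT : MeasurePreserving T μ μ)
    (hU : MeasurableSet U) (hA : MeasurableSet A) :
    ∑' j : ℕ, μ ({x ∈ U | (j : ℕ∞) < tauE T U x} ∩ T^[j] ⁻¹' A) ≤ μ A := by
  set W : ℕ → Set Ω := fun j => {x ∈ U | (j : ℕ∞) < tauE T U x} ∩ T^[j] ⁻¹' A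
  have hW : ∀ j, MeasurableSet (W j) := fun j =>
    (hU.inter (measurable_tauE hT.measurable hU (.of_discrete (s := Ioi (j : ℕ∞))))).inter
      (hT.measurable.iterate j hA)
  refine ENNReal.tsum_le_of_sum_range_le fun n => ?_
  have hdisj : (Finset.range n : Set ℕ).PairwiseDisjoint fun j => T^[n - j] ⁻¹' W j := by
    have key : ∀ j j', j < j' → j' < n →
        Disjoint (T^[n - j] ⁻¹' W j) (T^[n - j'] ⁻¹' W j') := fun j j' h h' =>
      (disjoint_preimage_iterate_sub h h'.le).mono (preimage_mono fun _ hx => hx.1.1)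
        (preimage_mono fun _ hx => hx.1.2)
    intro j hj j' hj' hne
    simp only [Finset.coe_range, mem_Iio] at hj hj'
    rcases hne.lt_or_gt with h | h
    · exact key j j' h hj'
    · exact (key j' j h hj).symm
  calc ∑ j ∈ Finset.range n, μ (W j)
      = ∑ j ∈ Finset.range n, μ (T^[n - j] ⁻¹' W j) := Finset.sum_congr rfl fun j _ =>
        ((hT.iterate _).measure_preimage (hW j).nullMeasurableSet).symm
    _ = μ (⋃ j ∈ Finset.range n, T^[n - j] ⁻¹' W j) :=
        (measure_biUnion_finset hdisj fun j _ => hT.measurable.iterate _ (hW j)).symm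
    _ ≤ μ (T^[n] ⁻¹' A) := measure_mono <| iUnion₂_subset fun j hj x hx => by
        have hx := hx.2
        rwa [mem_preimage, ← iterate_add_apply,
          Nat.add_sub_cancel' (Finset.mem_range.mp hj).le] at hx
    _ = μ A := (hT.iterate n).measure_preimage hA.nullMeasurableSet

end MeasurePreserving

section EntryCells

variable {Ω : Type*} {T : Ω → Ω} {U B : Set Ω} {s k k' j j' : ℕ}

def entryCell (T : Ω → Ω) (U B : Set Ω) (s k j : ℕ) : Set Ω :=
  {x ∈ U | tauE T U x = k} ∩ T^[j] ⁻¹' {x | tauE T B x = s}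

lemma disjoint_entryCell_of_ne (hk : k ≠ k') :
    Disjoint (entryCell T U B s k j) (entryCell T U B s k' j') :=
  disjoint_left.mpr fun _ hx hx' => hk (by exact_mod_cast hx.1.2.symm.trans hx'.1.2)

lemma disjoint_entryCell_of_lt (hBU : B ⊆ U) (hjj' : j < j') (hj'k : j' < k) :
    Disjoint (entryCell T U B s k j) (entryCell T U B s k j') := by
  refine disjoint_left.mpr fun x hx hx' => ?_
  obtain ⟨hs, hmem⟩ := iterate_mem_of_tauE_eq hx.2
  rw [← iterate_add_apply] at hmem
  have hk : k ≤ s + j := by exact_mod_cast hx.1.2 ▸ tauE_le_of_iterate_mem (by omega) (hBU hmem)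
  have hshift := tauE_iterate_of_lt (m := j' - j) hx.2 (by omega)
  rw [← iterate_add_apply, Nat.sub_add_cancel hjj'.le, hx'.2] at hshift
  have : s = s - (j' - j) := by exact_mod_cast hshift
  omega

lemma disjoint_entryCell (hBU : B ⊆ U) (hjk : j < k) (hj'k' : j' < k')
    (hne : (k, j) ≠ (k', j')) : Disjoint (entryCell T U B s k j) (entryCell T U B s k' j') := by
  rcases eq_or_ne k k' with rfl | hk
  · have hj : j ≠ j' := fun h => hne (h ▸ rfl)
    rcases hj.lt_or_gt with h | h
    · exact disjoint_entryCell_of_lt hBU h hj'k'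
    · exact (disjoint_entryCell_of_lt hBU h hjk).symm
  · exact disjoint_entryCell_of_ne hk

lemma entryCell_subset (hjk : j < k) :
    entryCell T U B s k j ⊆ {x ∈ U | (j : ℕ∞) < tauE T U x} ∩ T^[j] ⁻¹' {x | tauE T B x = s} :=
  fun _ ⟨⟨hxU, hxk⟩, hxs⟩ => ⟨⟨hxU, hxk ▸ by exact_mod_cast hjk⟩, hxs⟩

variable [MeasurableSpace Ω] {μ : Measure Ω}

lemma measurableSet_entryCell (hT : Measurable T) (hU : MeasurableSet U) (hB : MeasurableSet B)
    (s k j : ℕ) : MeasurableSet (entryCell T U B s k j) :=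
  (hU.inter (measurable_tauE hT hU (measurableSet_singleton _))).inter
    (hT.iterate j (measurable_tauE hT hB (measurableSet_singleton _)))

lemma tsum_measure_entryCell_le (hT : Measurable T) (hU : MeasurableSet U)
    (hB : MeasurableSet B) (s j : ℕ) :
    ∑' k : ℕ, (if j < k then μ (entryCell T U B s k j) else 0) ≤
      μ ({x ∈ U | (j : ℕ∞) < tauE T U x} ∩ T^[j] ⁻¹' {x | tauE T B x = s}) := by
  set C : ℕ → Set Ω := fun k => if j < k then entryCell T U B s k j else ∅
  have hC : ∀ k, MeasurableSet (C k) := fun k => by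
    by_cases h : j < k <;> simp only [C, h, if_true, if_false]
    exacts [measurableSet_entryCell hT hU hB s k j, .empty]
  have hCdisj : Pairwise (Disjoint on C) := fun k k' hk => by
    by_cases h : j < k <;> by_cases h' : j < k' <;> simp only [onFun, C, h, h', if_true, if_false]
    exacts [disjoint_entryCell_of_ne hk, disjoint_bot_right, disjoint_bot_left,
      disjoint_bot_left]
  calc ∑' k : ℕ, (if j < k then μ (entryCell T U B s k j) else 0)
      = ∑' k, μ (C k) := tsum_congr fun k => by by_cases h : j < k <;> simp [C, h]
    _ ≤ μ (⋃ k, C k) := tsum_meas_le_meas_iUnion_of_disjoint μ hC hCdisj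
    _ ≤ _ := measure_mono <| iUnion_subset fun k => by
        by_cases h : j < k <;> simp only [C, h, if_true, if_false]
        exacts [entryCell_subset h, empty_subset _]

lemma tsum_tsum_measure_entryCell_le (hT : MeasurePreserving T μ μ) (hU : MeasurableSet U)
    (hB : MeasurableSet B) (s : ℕ) :
    ∑' k : ℕ, ∑' j : ℕ, (if j < k then μ (entryCell T U B s k j) else 0) ≤ μ B := by
  have hA : MeasurableSet {x | tauE T B x = s} :=
    measurable_tauE hT.measurable hB (measurableSet_singleton _)
  calc ∑' k : ℕ, ∑' j : ℕ, (if j < k then μ (entryCell T U B s k j) else 0)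
      = ∑' j : ℕ, ∑' k : ℕ, (if j < k then μ (entryCell T U B s k j) else 0) :=
        ENNReal.tsum_comm
    _ ≤ ∑' j : ℕ, μ ({x ∈ U | (j : ℕ∞) < tauE T U x} ∩ T^[j] ⁻¹' {x | tauE T B x = s}) :=
        ENNReal.tsum_le_tsum fun j => tsum_measure_entryCell_le hT.measurable hU hB s j
    _ ≤ μ {x | tauE T B x = s} := tsum_measure_lt_tauE_inter_preimage_le hT hU hA
    _ ≤ μ (T^[s] ⁻¹' B) := measure_mono fun _ hx => (iterate_mem_of_tauE_eq hx).2
    _ = μ B := (hT.iterate s).measure_preimage hB.nullMeasurableSet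

end EntryCells

theorem stmt7_general {Ω : Type*} [MeasurableSpace Ω] (μ : Measure Ω)
    (T : Ω → Ω) (hT : MeasurePreserving T μ μ)
    (U : Set Ω) (hU : MeasurableSet U)
    (B : Set Ω) (hB : MeasurableSet B) (hBU : B ⊆ U)
    (s : ℕ)
    (Bkj : ℕ → ℕ → Set Ω)
    (hBkj : ∀ k j : ℕ, Bkj k j =
      {x ∈ U | tauE T U x = (k : ℕ∞)} ∩ T^[j] ⁻¹' {x | tauE T B x = (s : ℕ∞)}) :
    (∀ k k' j j' : ℕ, 1 ≤ k → j < k → 1 ≤ k' → j' < k' → (k, j) ≠ (k', j') →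
        Disjoint (Bkj k j) (Bkj k' j')) ∧
      ∑' k : ℕ, ∑' j : ℕ, (if j < k then μ (Bkj k j) else 0) ≤ μ B := by
  obtain rfl : Bkj = entryCell T U B s := funext₂ hBkj
  exact ⟨fun k k' j j' _ hjk _ hj'k' hne => disjoint_entryCell hBU hjk hj'k' hne,
    tsum_tsum_measure_entryCell_le hT hU hB s⟩

theorem stmt7 {Ω : Type*} [MeasurableSpace Ω] (μ : Measure Ω) [IsProbabilityMeasure μ]
    (T : Ω → Ω) (hT : MeasurePreserving T μ μ)
    (U : Set Ω) (hU : MeasurableSet U) (hUpos : 0 < μ U)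
    (B : Set Ω) (hB : MeasurableSet B) (hBU : B ⊆ U)
    (s : ℕ) (hs : 1 ≤ s)
    (Bkj : ℕ → ℕ → Set Ω)
    (hBkj : ∀ k j : ℕ, Bkj k j =
      {x ∈ U | tauE T U x = (k : ℕ∞)} ∩ T^[j] ⁻¹' {x | tauE T B x = (s : ℕ∞)}) :
    (∀ k k' j j' : ℕ, 1 ≤ k → j < k → 1 ≤ k' → j' < k' → (k, j) ≠ (k', j') →
        Disjoint (Bkj k j) (Bkj k' j')) ∧
      ∑' k : ℕ, ∑' j : ℕ, (if j < k then μ (Bkj k j) else 0) ≤ μ B :=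
  stmt7_general μ T hT U hU B hB hBU s Bkj hBkj
end

section
/- Suppose for a sequence of sets B_j with μ(B_j) → 0 the limiting entry times distribution F and return times distribution F̃ both exist and satisfy F(t) = ∫_t^∞ F̃(s) ds. If F = F̃ as functions on (0,∞), then F(t) = e^{−t} for all t > 0. -/
open MeasureTheory Set Function ENNReal

/-! A union bound over the first `⌊t / μ B⌋` iterates gives `1 - t ≤ F t ≤ 1`, so `F (0+) = 1`.
With `F̃ = F` the integral equation reads `F t = ∫_t^∞ F`. Were `F` not integrable on some
`(t, ∞)`, the integrals would take the junk value `0` on all of `(0, t]`, contradicting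
`F (0+) = 1`. So `F` is continuous, `F' = -F`, `F = c e^{-t}`, and `F (0+) = 1` gives `c = 1`. -/

open Filter Topology

theorem hasDerivAt_integral_Ioi {E : Type*} [NormedAddCommGroup E] [NormedSpace ℝ E]
    [CompleteSpace E] {f : ℝ → E} {a b : ℝ} (hf : IntegrableOn f (Ioi a)) (hab : a < b)
    (hb : ContinuousAt f b) : HasDerivAt (fun x ↦ ∫ y in Ioi x, f y) (-f b) b := by
  have hsplit : (fun x ↦ ∫ y in Ioi x, f y) =ᶠ[𝓝 b]
      fun x ↦ (∫ y in Ioi a, f y) - ∫ y in a..x, f y := by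
    filter_upwards [Ioi_mem_nhds hab] with x hx
    rw [← intervalIntegral.integral_Ioi_sub_Ioi hf (le_of_lt hx)]
    abel
  have hprim : HasDerivAt (fun x ↦ ∫ y in a..x, f y) (f b) b :=
    intervalIntegral.integral_hasDerivAt_right
      ((intervalIntegrable_iff_integrableOn_Ioc_of_le hab.le).2 (hf.mono_set Ioc_subset_Ioi_self))
      (AEStronglyMeasurable.stronglyMeasurableAtFilter_of_mem hf.aestronglyMeasurable
        (Ioi_mem_nhds hab)) hb
  simpa using ((hasDerivAt_const b _).sub hprim).congr_of_eventuallyEq hsplit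

section TailIntegralEquation

variable {F : ℝ → ℝ}

theorem integrableOn_Ioi_of_forall_eq_integral_Ioi
    (hfix : ∀ t, 0 < t → F t = ∫ s in Ioi t, F s) {c : ℝ} (hlim : Tendsto F (𝓝[>] 0) (𝓝 c))
    (hc : c ≠ 0) {t : ℝ} (ht : 0 < t) : IntegrableOn F (Ioi t) := by
  by_contra hnot
  have hzero : ∀ᶠ s in 𝓝[>] 0, F s = 0 := by
    filter_upwards [Ioo_mem_nhdsGT ht] with s hs
    rw [hfix s hs.1,
      integral_undef fun h ↦ hnot (IntegrableOn.mono_set h (Ioi_subset_Ioi hs.2.le))]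
  exact hc (tendsto_nhds_unique hlim (tendsto_const_nhds.congr' (hzero.mono fun _ h ↦ h.symm)))

theorem hasDerivAt_of_forall_eq_integral_Ioi (hfix : ∀ t, 0 < t → F t = ∫ s in Ioi t, F s)
    (hint : ∀ t, 0 < t → IntegrableOn F (Ioi t)) {t : ℝ} (ht : 0 < t) :
    HasDerivAt F (-F t) t := by
  have hF : F =ᶠ[𝓝 t] fun x ↦ ∫ s in Ioi x, F s :=
    eventually_of_mem (Ioi_mem_nhds ht) hfix
  have hcont : ContinuousAt F t :=
    (((hint (t / 2) (by positivity)).continuousOn_Ici_primitive_Ioi t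
      (by simp only [mem_Ici]; linarith)).continuousAt (Ici_mem_nhds (by linarith))).congr
      hF.symm
  exact (hasDerivAt_integral_Ioi (hint (t / 2) (by positivity)) (by linarith)
    hcont).congr_of_eventuallyEq hF

theorem exists_eq_mul_exp_neg_of_hasDerivAt (hF : ∀ t, 0 < t → HasDerivAt F (-F t) t) :
    ∃ c, ∀ t, 0 < t → F t = c * Real.exp (-t) := by
  have hderiv : ∀ t, 0 < t → HasDerivAt (fun x ↦ Real.exp x * F x) 0 t := fun t ht ↦
    ((Real.hasDerivAt_exp t).mul (hF t ht)).congr_deriv (by ring)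
  obtain ⟨c, hc⟩ := isOpen_Ioi.exists_is_const_of_deriv_eq_zero isPreconnected_Ioi
    (fun t ht ↦ (hderiv t ht).differentiableAt.differentiableWithinAt)
    (fun t ht ↦ (hderiv t ht).deriv)
  refine ⟨c, fun t ht ↦ ?_⟩
  rw [← hc t ht, Real.exp_neg]
  field_simp

theorem eq_exp_neg_of_forall_eq_integral_Ioi (hfix : ∀ t, 0 < t → F t = ∫ s in Ioi t, F s)
    (hlim : Tendsto F (𝓝[>] 0) (𝓝 1)) {t : ℝ} (ht : 0 < t) : F t = Real.exp (-t) := by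
  have hint (s : ℝ) (hs : 0 < s) : IntegrableOn F (Ioi s) :=
    integrableOn_Ioi_of_forall_eq_integral_Ioi hfix hlim one_ne_zero hs
  obtain ⟨c, hc⟩ := exists_eq_mul_exp_neg_of_hasDerivAt fun t ↦
    hasDerivAt_of_forall_eq_integral_Ioi hfix hint
  have hexp : Tendsto (fun s ↦ c * Real.exp (-s)) (𝓝[>] 0) (𝓝 c) := by
    have hcont : Continuous fun s : ℝ ↦ c * Real.exp (-s) := by fun_prop
    simpa using (hcont.tendsto 0).mono_left nhdsWithin_le_nhds
  have hF : Tendsto F (𝓝[>] 0) (𝓝 c) :=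
    hexp.congr' (eventually_nhdsWithin_of_forall fun s hs ↦ (hc s hs).symm)
  have hc1 : c = 1 := tendsto_nhds_unique hF hlim
  rw [hc t ht, hc1, one_mul]

end TailIntegralEquation

section FirstVisits

variable {Ω : Type*} [MeasurableSpace Ω] {μ : Measure Ω} {T : Ω → Ω}

/-- The event `{τ_B > r}` for the first entry time `τ_B = tauE T B`. -/
def noVisitUntil (T : Ω → Ω) (B : Set Ω) (r : ℝ) : Set Ω :=
  {x | ∀ n : ℕ, 1 ≤ n → (n : ℝ) ≤ r → T^[n] x ∉ B}

theorem measure_biUnion_preimage_iterate_le (hT : MeasurePreserving T μ μ) (B : Set Ω) (N : ℕ) :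
    μ (⋃ n ∈ Finset.Icc 1 N, T^[n] ⁻¹' B) ≤ N * μ B :=
  calc μ (⋃ n ∈ Finset.Icc 1 N, T^[n] ⁻¹' B)
      ≤ ∑ n ∈ Finset.Icc 1 N, μ (T^[n] ⁻¹' B) := measure_biUnion_finset_le _ _
    _ ≤ ∑ _n ∈ Finset.Icc 1 N, μ B := Finset.sum_le_sum fun n _ ↦
        (Measure.le_map_apply (hT.iterate n).aemeasurable B).trans_eq
          (by rw [(hT.iterate n).map_eq])
    _ = N * μ B := by simp

theorem one_sub_le_measureReal_noVisitUntil [IsProbabilityMeasure μ]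
    (hT : MeasurePreserving T μ μ) (B : Set Ω) {r : ℝ} (hr : 0 ≤ r) :
    1 - r * μ.real B ≤ μ.real (noVisitUntil T B r) := by
  set N := ⌊r⌋₊
  have hcover : (noVisitUntil T B r)ᶜ ⊆ ⋃ n ∈ Finset.Icc 1 N, T^[n] ⁻¹' B := by
    intro x hx
    simp only [noVisitUntil, mem_compl_iff, mem_ofPred_eq, not_forall, not_not] at hx
    obtain ⟨n, hn, hnr, hxB⟩ := hx
    exact mem_biUnion (Finset.mem_Icc.2 ⟨hn, Nat.le_floor hnr⟩) hxB
  have hle : μ.real (noVisitUntil T B r)ᶜ ≤ N * μ.real B := by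
    have := (measure_mono hcover).trans (measure_biUnion_preimage_iterate_le hT B N)
    simpa [measureReal_def, ENNReal.toReal_mul] using
      ENNReal.toReal_mono (by finiteness) this
  have hN : (N : ℝ) * μ.real B ≤ r * μ.real B :=
    mul_le_mul_of_nonneg_right (Nat.floor_le hr) measureReal_nonneg
  have hunion : 1 ≤ μ.real (noVisitUntil T B r) + μ.real (noVisitUntil T B r)ᶜ := by
    simpa [union_compl_self] using
      measureReal_union_le (μ := μ) (noVisitUntil T B r) (noVisitUntil T B r)ᶜ
  linarith

theorem one_sub_le_measureReal_noVisitUntil_div [IsProbabilityMeasure μ]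
    (hT : MeasurePreserving T μ μ) (B : Set Ω) {t : ℝ} (ht : 0 ≤ t) :
    1 - t ≤ μ.real (noVisitUntil T B (t / μ.real B)) := by
  have hbound := one_sub_le_measureReal_noVisitUntil hT B (r := t / μ.real B)
    (div_nonneg ht measureReal_nonneg)
  rcases eq_or_ne (μ.real B) 0 with hB | hB
  · rw [hB, mul_zero, sub_zero] at hbound
    rw [hB]
    linarith
  · rwa [div_mul_cancel₀ t hB] at hbound

end FirstVisits

theorem stmt11_general {Ω : Type*} [MeasurableSpace Ω] (μ : Measure Ω) [IsProbabilityMeasure μ]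
    (T : Ω → Ω) (hT : MeasurePreserving T μ μ)
    (B : ℕ → Set Ω)
    (F Ft : ℝ → ℝ)
    (hF : ∀ t : ℝ, 0 < t → Filter.Tendsto (fun j =>
      (μ {x | ∀ n : ℕ, 1 ≤ n → (n : ℝ) ≤ t / (μ (B j)).toReal → T^[n] x ∉ B j}).toReal)
      Filter.atTop (nhds (F t)))
    (hInt : ∀ t : ℝ, 0 < t → F t = ∫ s in Set.Ioi t, Ft s)
    (hEq : ∀ t : ℝ, 0 < t → F t = Ft t) :
    ∀ t : ℝ, 0 < t → F t = Real.exp (-t) := by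
  have hF' (t : ℝ) (ht : 0 < t) :
      Tendsto (fun j ↦ μ.real (noVisitUntil T (B j) (t / μ.real (B j)))) atTop (𝓝 (F t)) :=
    hF t ht
  have hlower (t : ℝ) (ht : 0 < t) : 1 - t ≤ F t :=
    ge_of_tendsto' (hF' t ht) fun j ↦ one_sub_le_measureReal_noVisitUntil_div hT (B j) ht.le
  have hupper (t : ℝ) (ht : 0 < t) : F t ≤ 1 :=
    le_of_tendsto' (hF' t ht) fun _ ↦ measureReal_le_one
  have hlim : Tendsto F (𝓝[>] 0) (𝓝 1) := by
    have hsub : Tendsto (fun t : ℝ ↦ 1 - t) (𝓝[>] 0) (𝓝 1) := by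
      have hcont : Continuous fun t : ℝ ↦ 1 - t := by fun_prop
      simpa using (hcont.tendsto 0).mono_left nhdsWithin_le_nhds
    exact tendsto_of_tendsto_of_tendsto_of_le_of_le' hsub tendsto_const_nhds
      (eventually_nhdsWithin_of_forall hlower) (eventually_nhdsWithin_of_forall hupper)
  refine fun t ht ↦ eq_exp_neg_of_forall_eq_integral_Ioi (fun t ht ↦ ?_) hlim ht
  rw [hInt t ht]
  exact setIntegral_congr_fun measurableSet_Ioi fun s hs ↦ (hEq s (ht.trans hs)).symm

theorem stmt11 {Ω : Type*} [MeasurableSpace Ω] (μ : Measure Ω) [IsProbabilityMeasure μ]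
    (T : Ω → Ω) (hT : MeasurePreserving T μ μ) (hTerg : Ergodic T μ)
    (B : ℕ → Set Ω) (hBmeas : ∀ j, MeasurableSet (B j)) (hBpos : ∀ j, 0 < μ (B j))
    (hB0 : Filter.Tendsto (fun j => μ (B j)) Filter.atTop (nhds 0))
    (F Ft : ℝ → ℝ)
    (hF : ∀ t : ℝ, 0 < t → Filter.Tendsto (fun j =>
      (μ {x | ∀ n : ℕ, 1 ≤ n → (n : ℝ) ≤ t / (μ (B j)).toReal → T^[n] x ∉ B j}).toReal)
      Filter.atTop (nhds (F t)))
    (hFt : ∀ t : ℝ, 0 < t → Filter.Tendsto (fun j =>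
      (μ (B j ∩ {x | ∀ n : ℕ, 1 ≤ n → (n : ℝ) ≤ t / (μ (B j)).toReal →
        T^[n] x ∉ B j})).toReal / (μ (B j)).toReal)
      Filter.atTop (nhds (Ft t)))
    (hInt : ∀ t : ℝ, 0 < t → F t = ∫ s in Set.Ioi t, Ft s)
    (hEq : ∀ t : ℝ, 0 < t → F t = Ft t) :
    ∀ t : ℝ, 0 < t → F t = Real.exp (-t) :=
  stmt11_general μ T hT B F Ft hF hInt hEq
end

section
/- Let (Ω, μ, T) be an ergodic probability-preserving system and U ⊆ Ω with μ(U) > 0. Then ∫_Ω τ_U dμ < ∞ if and only if ∫_U τ_U² dμ < ∞. -/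
/-!
Write `S n = {τ_U > n}`. Since `T⁻¹ (Uᶜ ∩ S n) = S (n + 1)` and `T` preserves `μ`, we get
`μ (S n) = μ (U ∩ S n) + μ (S (n + 1))`; ergodicity forces `μ (S n) → 0`, so `μ (S n)` is the tail
sum `∑_{k ≥ n} μ (U ∩ S k)`. Summing the layer-cake formulas then gives
`∫ τ_U = ∑ (k + 1) μ (U ∩ S k)`, `∫_U τ_U² = ∑ (2k + 1) μ (U ∩ S k)` and (Kac)
`∑ μ (U ∩ S k) = μ Ω`, hence `2 ∫ τ_U = ∫_U τ_U² + μ Ω`, and both sides are finite together.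
-/
open MeasureTheory Set Function ENNReal

open Filter Topology

lemma tsum_ite_coe_lt_coe {M : Type*} [AddCommMonoid M] [TopologicalSpace M] (k : ℕ)
    (g : ℕ → M) :
    ∑' n : ℕ, (if (n : ℕ∞) < k then g n else 0) = ∑ n ∈ Finset.range k, g n := by
  rw [tsum_eq_sum (s := Finset.range k) fun n hn => if_neg (by simpa using hn)]
  exact Finset.sum_congr rfl fun n hn => if_pos (by simpa using hn)

lemma ENat.toENNReal_eq_tsum_ite_lt (m : ℕ∞) :
    (m : ℝ≥0∞) = ∑' n : ℕ, if (n : ℕ∞) < m then (1 : ℝ≥0∞) else 0 := by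
  cases m using ENat.recTopCoe with
  | top => simp [ENNReal.tsum_const_eq_top_of_ne_zero one_ne_zero]
  | coe k => rw [tsum_ite_coe_lt_coe]; simp

lemma Finset.sum_range_two_mul_add_one {R : Type*} [CommSemiring R] (k : ℕ) :
    ∑ n ∈ Finset.range k, (2 * n + 1 : R) = k ^ 2 := by
  induction k with
  | zero => simp
  | succ k ih => rw [Finset.sum_range_succ, ih]; push_cast; ring

lemma ENat.toENNReal_sq_eq_tsum_ite_lt (m : ℕ∞) :
    (m : ℝ≥0∞) ^ 2 = ∑' n : ℕ, if (n : ℕ∞) < m then (2 * n + 1 : ℝ≥0∞) else 0 := by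
  cases m using ENat.recTopCoe with
  | top =>
    simp only [ENat.toENNReal_top, ENat.natCast_lt_top, if_true]
    refine (ENNReal.top_pow two_ne_zero).trans (top_le_iff.mp ?_).symm
    calc ∞ = ∑' _ : ℕ, (1 : ℝ≥0∞) := (ENNReal.tsum_const_eq_top_of_ne_zero one_ne_zero).symm
      _ ≤ ∑' n : ℕ, (2 * n + 1 : ℝ≥0∞) := ENNReal.tsum_le_tsum fun n => le_add_self
  | coe k => rw [tsum_ite_coe_lt_coe, Finset.sum_range_two_mul_add_one]; simp

section LayerCake

variable {Ω : Type*} [MeasurableSpace Ω] (μ : Measure Ω) {f : Ω → ℕ∞}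

lemma lintegral_tsum_ite_lt (hf : ∀ n : ℕ, MeasurableSet {x | (n : ℕ∞) < f x})
    (g : ℕ → ℝ≥0∞) :
    ∫⁻ x, ∑' n : ℕ, (if (n : ℕ∞) < f x then g n else 0) ∂μ
      = ∑' n : ℕ, g n * μ {x | (n : ℕ∞) < f x} := by
  have hite : ∀ (n : ℕ) x, (if (n : ℕ∞) < f x then g n else 0)
      = {x | (n : ℕ∞) < f x}.indicator (fun _ => g n) x := fun n x => by
    simp [Set.indicator_apply]
  simp_rw [hite]
  rw [lintegral_tsum fun n => (measurable_const.indicator (hf n)).aemeasurable]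
  simp_rw [lintegral_indicator_const (hf _)]

lemma lintegral_enat_eq_tsum_measure_lt (hf : ∀ n : ℕ, MeasurableSet {x | (n : ℕ∞) < f x}) :
    ∫⁻ x, (f x : ℝ≥0∞) ∂μ = ∑' n : ℕ, μ {x | (n : ℕ∞) < f x} := by
  simp_rw [ENat.toENNReal_eq_tsum_ite_lt, lintegral_tsum_ite_lt μ hf, one_mul]

lemma lintegral_enat_sq_eq_tsum_measure_lt (hf : ∀ n : ℕ, MeasurableSet {x | (n : ℕ∞) < f x}) :
    ∫⁻ x, (f x : ℝ≥0∞) ^ 2 ∂μ = ∑' n : ℕ, (2 * n + 1) * μ {x | (n : ℕ∞) < f x} := by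
  simp_rw [ENat.toENNReal_sq_eq_tsum_ite_lt, lintegral_tsum_ite_lt μ hf]

end LayerCake

namespace ENNReal

lemma eq_tsum_add_of_eq_add_succ {a b : ℕ → ℝ≥0∞} (h : ∀ n, b n = a n + b (n + 1))
    (hb : Tendsto b atTop (𝓝 0)) (n : ℕ) : b n = ∑' k, a (k + n) := by
  have hpartial : ∀ m, b n = ∑ k ∈ Finset.range m, a (k + n) + b (m + n) := by
    intro m
    induction m with
    | zero => simp
    | succ m ih =>
      rw [ih, h (m + n), Finset.sum_range_succ, Nat.add_right_comm m 1 n, ← add_assoc]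
  have hlim := (tendsto_nat_tsum fun k => a (k + n)).add (hb.comp (tendsto_add_atTop_nat n))
  simp only [comp_apply, ← hpartial, add_zero] at hlim
  exact tendsto_const_nhds_iff.mp hlim

lemma tsum_tsum_add_eq_tsum_succ_mul (a : ℕ → ℝ≥0∞) :
    ∑' n, ∑' k, a (k + n) = ∑' m, (m + 1) * a m := by
  rw [ENNReal.tsum_comm, ← ENNReal.tsum_prod (f := fun k n => a (k + n)),
    ← (Finset.HasAntidiagonal.sigmaAntidiagonalEquivProd (A := ℕ)).tsum_eq, ENNReal.tsum_sigma']
  refine tsum_congr fun m => ?_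
  simp only [Finset.HasAntidiagonal.sigmaAntidiagonalEquivProd, Equiv.coe_fn_mk]
  rw [Finset.tsum_subtype (Finset.HasAntidiagonal.antidiagonal m) fun p => a (p.1 + p.2),
    Finset.sum_congr rfl fun p hp => congrArg a (Finset.HasAntidiagonal.mem_antidiagonal.1 hp),
    Finset.sum_const, Finset.Nat.card_antidiagonal, nsmul_eq_mul, Nat.cast_succ]

end ENNReal

section FirstEntryTime

variable {Ω : Type*} {T : Ω → Ω} {U : Set Ω}

lemma lt_tauE_iff {x : Ω} {n : ℕ} :
    (n : ℕ∞) < tauE T U x ↔ ∀ k, 0 < k → k ≤ n → T^[k] x ∉ U := by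
  rw [← ENat.add_one_le_iff (ENat.natCast_ne_top n), tauE, le_sInf_iff, forall_mem_image]
  refine forall_congr' fun k => ?_
  norm_cast
  simp only [mem_ofPred_eq, and_imp]
  grind

lemma tauE_pos (x : Ω) : 0 < tauE T U x :=
  lt_tauE_iff (n := 0).2 fun _ hk hk0 => absurd hk0 (by omega)

lemma setOf_succ_lt_tauE (n : ℕ) :
    {x | ((n + 1 : ℕ) : ℕ∞) < tauE T U x} = T ⁻¹' (Uᶜ ∩ {x | (n : ℕ∞) < tauE T U x}) := by
  ext x
  simp only [mem_ofPred_eq, mem_preimage, mem_inter_iff, mem_compl_iff, lt_tauE_iff]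
  constructor
  · intro h
    refine ⟨h 1 one_pos (by omega), fun k hk hkn => ?_⟩
    rw [← iterate_succ_apply]
    exact h (k + 1) k.succ_pos (by omega)
  · rintro ⟨h1, h⟩ (_ | _ | k) hk hkn
    · omega
    · exact h1
    · rw [iterate_succ_apply]
      exact h (k + 1) k.succ_pos (by omega)

variable [MeasurableSpace Ω] {μ : Measure Ω}

lemma measurableSet_lt_tauE (hT : Measurable T) (hU : MeasurableSet U) (n : ℕ) :
    MeasurableSet {x | (n : ℕ∞) < tauE T U x} := by
  induction n with
  | zero => simp [tauE_pos]
  | succ n ih => rw [setOf_succ_lt_tauE]; exact hT (hU.compl.inter ih)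

lemma measure_lt_tauE_eq_add (hT : MeasurePreserving T μ μ) (hU : MeasurableSet U) (n : ℕ) :
    μ {x | (n : ℕ∞) < tauE T U x}
      = μ.restrict U {x | (n : ℕ∞) < tauE T U x} + μ {x | ((n + 1 : ℕ) : ℕ∞) < tauE T U x} := by
  have hS := measurableSet_lt_tauE (U := U) hT.measurable hU n
  rw [Measure.restrict_apply hS, setOf_succ_lt_tauE,
    hT.measure_preimage (hU.compl.inter hS).nullMeasurableSet, ← sdiff_eq_compl_inter,
    measure_inter_add_sdiff _ hU]

lemma measure_tauE_eq_top [IsFiniteMeasure μ] (hT : Ergodic T μ) (hU : MeasurableSet U)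
    (hμU : μ U ≠ 0) : μ {x | tauE T U x = ⊤} = 0 := by
  set W := ⋃ k : ℕ, T^[k + 1] ⁻¹' U
  have hW : MeasurableSet W := .iUnion fun k => hT.measurable.iterate _ hU
  have hTW : T ⁻¹' W ⊆ W := by
    rw [preimage_iUnion]
    exact iUnion_subset fun k x hx => mem_iUnion.2 ⟨k + 1, hx⟩
  have hUW : T ⁻¹' U ⊆ W := subset_iUnion_of_subset 0 subset_rfl
  have hWc : μ Wᶜ = 0 := by
    rcases hT.ae_empty_or_univ_of_preimage_ae_le hW.nullMeasurableSet hTW.eventuallyLE with h | h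
    · refine absurd (measure_mono_null hUW (measure_congr h |>.trans measure_empty)) ?_
      rwa [hT.measure_preimage hU.nullMeasurableSet]
    · exact ae_eq_univ.1 h
  refine measure_mono_null (t := Wᶜ) (fun x hx hxW => ?_) hWc
  obtain ⟨k, hk⟩ := mem_iUnion.1 hxW
  exact lt_tauE_iff.1 (ENat.eq_top_iff_forall_gt.1 hx (k + 1)) (k + 1) k.succ_pos le_rfl hk

lemma tendsto_measure_lt_tauE [IsFiniteMeasure μ] (hT : Ergodic T μ) (hU : MeasurableSet U)
    (hμU : μ U ≠ 0) : Tendsto (fun n : ℕ => μ {x | (n : ℕ∞) < tauE T U x}) atTop (𝓝 0) := by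
  have hanti : Antitone fun n : ℕ => {x | (n : ℕ∞) < tauE T U x} :=
    fun m n hmn x (hx : (n : ℕ∞) < tauE T U x) => lt_of_le_of_lt (by exact_mod_cast hmn) hx
  have hlim := tendsto_measure_iInter_atTop
    (fun n => (measurableSet_lt_tauE hT.measurable hU n).nullMeasurableSet) hanti
    ⟨0, measure_ne_top μ _⟩
  have hinter : ⋂ n : ℕ, {x | (n : ℕ∞) < tauE T U x} = {x | tauE T U x = ⊤} := by
    ext x
    simp [ENat.eq_top_iff_forall_gt]
  rwa [hinter, measure_tauE_eq_top hT hU hμU] at hlim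

theorem two_mul_lintegral_tauE [IsFiniteMeasure μ] (hT : Ergodic T μ) (hU : MeasurableSet U)
    (hμU : μ U ≠ 0) :
    2 * ∫⁻ x, (tauE T U x : ℝ≥0∞) ∂μ = ∫⁻ x in U, (tauE T U x : ℝ≥0∞) ^ 2 ∂μ + μ univ := by
  have hS := measurableSet_lt_tauE hT.measurable hU
  set a : ℕ → ℝ≥0∞ := fun n => μ.restrict U {x | (n : ℕ∞) < tauE T U x}
  set b : ℕ → ℝ≥0∞ := fun n => μ {x | (n : ℕ∞) < tauE T U x}
  have htail : ∀ n, b n = ∑' k, a (k + n) := ENNReal.eq_tsum_add_of_eq_add_succ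
    (measure_lt_tauE_eq_add hT.toMeasurePreserving hU) (tendsto_measure_lt_tauE hT hU hμU)
  have huniv : μ univ = ∑' k, a k := by
    simpa [b, tauE_pos] using htail 0
  rw [lintegral_enat_eq_tsum_measure_lt μ hS, lintegral_enat_sq_eq_tsum_measure_lt _ hS]
  change 2 * ∑' n, b n = ∑' n, (2 * n + 1) * a n + μ univ
  rw [funext htail, ENNReal.tsum_tsum_add_eq_tsum_succ_mul, huniv, ← ENNReal.tsum_mul_left,
    ← ENNReal.tsum_add]
  exact tsum_congr fun n => by ring

end FirstEntryTime

theorem stmt12_general {Ω : Type*} [MeasurableSpace Ω] (μ : Measure Ω) [IsProbabilityMeasure μ]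
    (T : Ω → Ω) (hTerg : Ergodic T μ)
    (U : Set Ω) (hU : MeasurableSet U) (hUpos : 0 < μ U) :
    (∫⁻ x, ((tauE T U x : ℝ≥0∞)) ∂μ < ⊤) ↔
      (∫⁻ x in U, ((tauE T U x : ℝ≥0∞)) ^ 2 ∂μ < ⊤) := by
  have key := two_mul_lintegral_tauE hTerg hU hUpos.ne'
  calc _ ↔ 2 * ∫⁻ x, (tauE T U x : ℝ≥0∞) ∂μ < ∞ := by simp [lt_top_iff_ne_top, ENNReal.mul_eq_top]
    _ ↔ _ := by rw [key, ENNReal.add_lt_top]; simp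

theorem stmt12 {Ω : Type*} [MeasurableSpace Ω] (μ : Measure Ω) [IsProbabilityMeasure μ]
    (T : Ω → Ω) (hT : MeasurePreserving T μ μ) (hTerg : Ergodic T μ)
    (U : Set Ω) (hU : MeasurableSet U) (hUpos : 0 < μ U) :
    (∫⁻ x, ((tauE T U x : ℝ≥0∞)) ∂μ < ⊤) ↔
      (∫⁻ x in U, ((tauE T U x : ℝ≥0∞)) ^ 2 ∂μ < ⊤) :=
  stmt12_general μ T hTerg U hU hUpos
end
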